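/- The submonoid of the 3-strand braid group Br₃ generated by σ₁ and σ₂⁻¹ is a free monoid on these two generators, but the subgroup of Br₃ generated by σ₁ and σ₂⁻¹ is all of Br₃, which is not a free group. -/

import Mathlib

/-- The braid relation for `Br₃`: `σ₁σ₂σ₁ = σ₂σ₁σ₂`. -/
def braidRel3 : Set (FreeGroup (Fin 2)) :=
  {FreeGroup.of 0 * FreeGroup.of 1 * FreeGroup.of 0 *
    (FreeGroup.of 1 * FreeGroup.of 0 * FreeGroup.of 1)⁻¹}

/-- The 3-strand braid group `Br₃ = ⟨σ₁, σ₂ ∣ σ₁σ₂σ₁ = σ₂σ₁σ₂⟩`. -/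
def Braid3 : Type := PresentedGroup braidRel3

noncomputable instance : Group Braid3 := by unfold Braid3; infer_instance

/-- `σ₁` in `Br₃`. -/
noncomputable def b3σ₁ : Braid3 := PresentedGroup.of 0
/-- `σ₂` in `Br₃`. -/
noncomputable def b3σ₂ : Braid3 := PresentedGroup.of 1

/-!
The assignment `σ₁ ↦ T = [[1, 1], [0, 1]]`, `σ₂ ↦ L⁻¹` with `L = [[1, 0], [1, 1]]` respects the
braid relation, so it defines a representation `Br₃ → SL(2, ℤ)` sending `σ₁, σ₂⁻¹` to `T, L`.
These generate a free monoid by a ping-pong argument on matrices with nonnegative entries: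
left multiplication by `T` (resp. `L`) makes row `0` (resp. row `1`) strictly dominate the other
row, so the first letter of a word is read off from its image and can be cancelled.

`Br₃` is not free: in every abelian quotient the braid relation forces `σ₁` and `σ₂` to have the
same image, so abelian quotients of `Br₃` are cyclic, which rules out free groups of rank `≥ 2`
(they surject onto `ℤ²`); and `Br₃` is not abelian (it maps onto `S₃`), which rules out rank `≤ 1`.
-/

theorem FreeMonoid.lift_injective_of_pingPong {ι M : Type*} [Monoid M] [IsLeftCancelMul M]
    (f : ι → M) (P : Set M) (X : ι → Set M) (hX : Pairwise fun i j ↦ Disjoint (X i) (X j))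
    (h1X : ∀ i, 1 ∉ X i) (hXP : ∀ i, X i ⊆ P) (h1P : 1 ∈ P)
    (hmul : ∀ i, ∀ p ∈ P, f i * p ∈ X i) :
    Function.Injective (FreeMonoid.lift f) := by
  have hP (w : FreeMonoid ι) : FreeMonoid.lift f w ∈ P := by
    induction w using FreeMonoid.inductionOn' with
    | one => simpa using h1P
    | of_mul i w ih => simpa using hXP i (hmul i _ ih)
  intro w₁ w₂ h
  induction w₁ using FreeMonoid.inductionOn' generalizing w₂ with
  | one =>
    cases w₂ using FreeMonoid.casesOn with
    | one => rfl
    | of_mul j w₂ =>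
      simp only [map_one, map_mul, FreeMonoid.lift_eval_of] at h
      exact absurd (h ▸ hmul j _ (hP w₂)) (h1X j)
  | of_mul i w₁ ih =>
    cases w₂ using FreeMonoid.casesOn with
    | one =>
      simp only [map_one, map_mul, FreeMonoid.lift_eval_of] at h
      exact absurd (h ▸ hmul i _ (hP w₁)) (h1X i)
    | of_mul j w₂ =>
      simp only [map_mul, FreeMonoid.lift_eval_of] at h
      obtain rfl : i = j := by
        by_contra hij
        exact Set.disjoint_left.mp (hX hij) (hmul i _ (hP w₁)) (h ▸ hmul j _ (hP w₂))
      rw [ih (mul_left_cancel h)]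

namespace ModularGroup

open Matrix Matrix.SpecialLinearGroup MatrixGroups

def L : SL(2, ℤ) :=
  ⟨!![1, 0; 1, 1], by simp [Matrix.det_fin_two_of]⟩

@[simp]
theorem coe_L : ↑L = (!![1, 0; 1, 1] : Matrix (Fin 2) (Fin 2) ℤ) :=
  rfl

theorem T_mul_L_inv_mul_T : T * L⁻¹ * T = L⁻¹ * T * L⁻¹ := by
  decide

theorem T_mul_apply_zero (g : SL(2, ℤ)) : (T * g) 0 = g 0 + g 1 := by
  ext j
  simp [Matrix.mul_apply, Fin.sum_univ_two]

theorem L_mul_apply_zero (g : SL(2, ℤ)) : (L * g) 0 = g 0 := by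
  ext j
  simp [Matrix.mul_apply, Fin.sum_univ_two]

theorem L_mul_apply_one (g : SL(2, ℤ)) : (L * g) 1 = g 0 + g 1 := by
  ext j
  simp [Matrix.mul_apply, Fin.sum_univ_two]

def nonnegEntries : Set SL(2, ℤ) := {g | ∀ i, 0 ≤ g i}

theorem one_mem_nonnegEntries : 1 ∈ nonnegEntries := fun i j ↦ by
  rw [Matrix.SpecialLinearGroup.coe_one, one_apply]
  split_ifs <;> simp

def rowDominant (i : Fin 2) : Set SL(2, ℤ) := {g ∈ nonnegEntries | ∀ j ≠ i, g j < g i}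

theorem row_pos_of_mem_nonnegEntries {g : SL(2, ℤ)} (hg : g ∈ nonnegEntries) (i : Fin 2) :
    0 < g i :=
  lt_of_le_of_ne (hg i) (row_ne_zero g i).symm

theorem one_notMem_rowDominant (i : Fin 2) : 1 ∉ rowDominant i := fun h ↦ by
  obtain ⟨j, hj⟩ := exists_ne i
  exact absurd ((h.2 j hj).le j) (by simp [one_apply_ne hj.symm])

theorem T_mul_mem_rowDominant {p : SL(2, ℤ)} (hp : p ∈ nonnegEntries) :
    T * p ∈ rowDominant 0 := by
  refine ⟨Fin.forall_fin_two.mpr ⟨?_, ?_⟩, Fin.forall_fin_two.mpr ⟨(absurd rfl ·), fun _ ↦ ?_⟩⟩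
  · rw [T_mul_apply_zero]
    exact add_nonneg (hp 0) (hp 1)
  · rw [T_mul_apply_one]
    exact hp 1
  · rw [T_mul_apply_zero, T_mul_apply_one]
    exact lt_add_of_pos_left _ (row_pos_of_mem_nonnegEntries hp 0)

theorem L_mul_mem_rowDominant {p : SL(2, ℤ)} (hp : p ∈ nonnegEntries) :
    L * p ∈ rowDominant 1 := by
  refine ⟨Fin.forall_fin_two.mpr ⟨?_, ?_⟩, Fin.forall_fin_two.mpr ⟨fun _ ↦ ?_, (absurd rfl ·)⟩⟩
  · rw [L_mul_apply_zero]
    exact hp 0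
  · rw [L_mul_apply_one]
    exact add_nonneg (hp 0) (hp 1)
  · rw [L_mul_apply_zero, L_mul_apply_one]
    exact lt_add_of_pos_right _ (row_pos_of_mem_nonnegEntries hp 1)

theorem lift_T_L_injective : Function.Injective (FreeMonoid.lift ![T, L]) :=
  FreeMonoid.lift_injective_of_pingPong _ nonnegEntries rowDominant
    (fun i j hij ↦ Set.disjoint_left.mpr fun _ hi hj ↦ lt_asymm (hi.2 j hij.symm) (hj.2 i hij))
    one_notMem_rowDominant (fun _ _ hg ↦ hg.1)
    one_mem_nonnegEntries
    (Fin.forall_fin_two.mpr ⟨fun _ ↦ T_mul_mem_rowDominant, fun _ ↦ L_mul_mem_rowDominant⟩)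

end ModularGroup

namespace Braid3

noncomputable def lift {G : Type*} [Group G] (a b : G) (h : a * b * a = b * a * b) :
    Braid3 →* G :=
  PresentedGroup.toGroup (rels := braidRel3) (f := ![a, b]) <| by
    rintro _ rfl
    rw [map_mul, map_inv, mul_inv_eq_one]
    simpa using h

variable {G : Type*} [Group G] {a b : G} (h : a * b * a = b * a * b)

@[simp] theorem lift_σ₁ : lift a b h b3σ₁ = a := PresentedGroup.toGroup.of _
@[simp] theorem lift_σ₂ : lift a b h b3σ₂ = b := PresentedGroup.toGroup.of _

theorem braid_rel : b3σ₁ * b3σ₂ * b3σ₁ = b3σ₂ * b3σ₁ * b3σ₂ :=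
  PresentedGroup.mk_eq_mk_of_mul_inv_mem (rels := braidRel3) rfl

theorem mem_of_σ₁_mem_of_σ₂_mem {H : Subgroup Braid3} (h₁ : b3σ₁ ∈ H) (h₂ : b3σ₂ ∈ H)
    (x : Braid3) : x ∈ H :=
  PresentedGroup.generated_by braidRel3 H (Fin.forall_fin_two.mpr ⟨h₁, h₂⟩) x

theorem map_σ₁_eq_map_σ₂ {C : Type*} [CommGroup C] (χ : Braid3 →* C) : χ b3σ₁ = χ b3σ₂ := by
  have h := congrArg χ braid_rel
  simp only [map_mul] at h
  rw [mul_comm (χ b3σ₂) (χ b3σ₁)] at h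
  exact mul_left_cancel h

theorem isCyclic_of_surjective {C : Type*} [CommGroup C] (χ : Braid3 →* C)
    (hχ : Function.Surjective χ) : IsCyclic C := by
  refine ⟨χ b3σ₁, fun c ↦ ?_⟩
  obtain ⟨x, rfl⟩ := hχ c
  have hσ₁ : b3σ₁ ∈ (Subgroup.zpowers (χ b3σ₁)).comap χ := Subgroup.mem_zpowers _
  have hσ₂ : b3σ₂ ∈ (Subgroup.zpowers (χ b3σ₁)).comap χ := by
    simp [map_σ₁_eq_map_σ₂ χ]
  exact mem_of_σ₁_mem_of_σ₂_mem hσ₁ hσ₂ x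

theorem σ₁_mul_σ₂_ne : b3σ₁ * b3σ₂ ≠ b3σ₂ * b3σ₁ := by
  let π := lift (Equiv.swap (0 : Fin 3) 1) (Equiv.swap 1 2) (by decide)
  intro h
  have := congrArg π h
  simp only [map_mul, π, lift_σ₁, lift_σ₂] at this
  exact absurd this (by decide)

end Braid3

theorem FreeGroup.mul_comm_of_subsingleton {S : Type*} [Subsingleton S] (x y : FreeGroup S) :
    x * y = y * x := by
  have := Subgroup.isMulCommutative_closure (k := Set.range (FreeGroup.of : S → FreeGroup S))
    (by rintro _ ⟨s, rfl⟩ _ ⟨t, rfl⟩; rw [Subsingleton.elim s t])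
  rw [FreeGroup.closure_range_of] at this
  exact setLike_mul_comm (Subgroup.mem_top x) (Subgroup.mem_top y)

open Multiplicative in
theorem FreeGroup.exists_surjective_to_int_prod_int {S : Type*} {s t : S} (hst : s ≠ t) :
    ∃ ψ : FreeGroup S →* Multiplicative ℤ × Multiplicative ℤ, Function.Surjective ψ := by
  classical
  refine ⟨FreeGroup.lift fun u ↦ ((Pi.mulSingle s (ofAdd 1) : S → Multiplicative ℤ) u,
    (Pi.mulSingle t (ofAdd 1) : S → Multiplicative ℤ) u), ?_⟩
  rintro ⟨m, n⟩
  refine ⟨FreeGroup.of s ^ toAdd m * FreeGroup.of t ^ toAdd n, ?_⟩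
  simp [hst, hst.symm, ← ofAdd_zsmul]

theorem Braid3.isEmpty_mulEquiv_freeGroup (S : Type*) : IsEmpty (Braid3 ≃* FreeGroup S) := by
  refine ⟨fun e ↦ ?_⟩
  rcases subsingleton_or_nontrivial S with hS | hS
  · refine σ₁_mul_σ₂_ne (e.injective ?_)
    simpa only [map_mul] using FreeGroup.mul_comm_of_subsingleton _ _
  · obtain ⟨s, t, hst⟩ := exists_pair_ne S
    obtain ⟨ψ, hψ⟩ := FreeGroup.exists_surjective_to_int_prod_int hst
    exact not_isCyclic_prod_of_infinite_nontrivial (Multiplicative ℤ) (Multiplicative ℤ)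
      (isCyclic_of_surjective (ψ.comp e.toMonoidHom) (hψ.comp e.surjective))

/-- The submonoid of `Br₃` generated by `σ₁` and `σ₂⁻¹` is a free
monoid on these two generators (the canonical map from the free monoid on two
letters is injective), while the subgroup they generate is all of `Br₃`,
which is not a free group. -/
theorem braid3_free_submonoid_nonfree_subgroup :
    Function.Injective
      (FreeMonoid.lift (fun i : Fin 2 => if i = 0 then b3σ₁ else b3σ₂⁻¹) :
        FreeMonoid (Fin 2) →* Braid3) ∧
    Subgroup.closure {b3σ₁, b3σ₂⁻¹} = (⊤ : Subgroup Braid3) ∧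
    ¬ ∃ S : Type, Nonempty (Braid3 ≃* FreeGroup S) := by
  refine ⟨?_, ?_, fun ⟨S, ⟨e⟩⟩ ↦ (Braid3.isEmpty_mulEquiv_freeGroup S).false e⟩
  · let φ := Braid3.lift ModularGroup.T ModularGroup.L⁻¹ ModularGroup.T_mul_L_inv_mul_T
    have hφ : φ.comp (FreeMonoid.lift fun i : Fin 2 => if i = 0 then b3σ₁ else b3σ₂⁻¹) =
        FreeMonoid.lift ![ModularGroup.T, ModularGroup.L] := by
      rw [FreeMonoid.comp_lift]
      refine congrArg FreeMonoid.lift (funext fun i ↦ ?_)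
      fin_cases i <;> simp [φ]
    refine Function.Injective.of_comp (f := φ) ?_
    rw [← MonoidHom.coe_comp, hφ]
    exact ModularGroup.lift_T_L_injective
  · have hσ₂ : b3σ₂ ∈ Subgroup.closure {b3σ₁, b3σ₂⁻¹} := by
      simpa using inv_mem (Subgroup.subset_closure (by simp) :
        b3σ₂⁻¹ ∈ Subgroup.closure {b3σ₁, b3σ₂⁻¹})
    exact eq_top_iff.mpr fun x _ ↦
      Braid3.mem_of_σ₁_mem_of_σ₂_mem (Subgroup.subset_closure (by simp)) hσ₂ x
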